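/- If the set function f : 2^V → ℝ≥0 is monotone and (γ,β)-weakly submodular for some γ ∈ (0,1] and β ≥ 1, then every stationary point (p_1,…,p_K) of its Multinoulli Extension F over the domain ∏_{k=1}^K Δ_{n_k} satisfies F(p_1,…,p_K) ≥ (γ²/(β + β(1−γ) + γ²))·f(S) for every feasible subset S ⊆ V. -/

import Mathlib

/-
Stationarity tested against the feasible point `indVec S` gives
`⟨indVec S, ∇F(x)⟩ ≤ ⟨x, ∇F(x)⟩`, and both sides are means over the random set `R` drawn by the
trials. Write `R₋ₛ` for the set drawn by all trials but the one in slot `s`. By independence of the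
trials, `∂F/∂x_v = ∑_b E[f(v | R₋₍ₖ,ᵦ₎)]` for `v ∈ V_k`, so `⟨x, ∇F(x)⟩ = E[∑ₛ (f(R) - f(R₋ₛ))]`.
The slots with `R₋ₛ ≠ R` drew pairwise distinct elements, so weak submodularity from above bounds
this by `β F(x)`. Pointwise, `R₋ₛ` is `R` or `R \ {u}` for one element `u`, and weak submodularity
from below on `R \ {u} ⊆ R ∪ {v}` compares `f(v | R₋ₛ)` with `f(v | R)`; summing over the `B_k`
slots of the community of `v` and over `v ∈ S \ R` gives
`γ² (f(S) - f(R)) ≤ ∑_{v ∈ S} B_k⁻¹ ∑_b f(v | R₋₍ₖ,ᵦ₎) + (1 - γ) ∑ₛ (f(R) - f(R₋ₛ))`.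
Taking means, `γ² f(S) - γ² F(x) ≤ (2 - γ) ⟨x, ∇F(x)⟩ ≤ (2 - γ) β F(x)`.
-/

open Finset

noncomputable section

namespace Multinoulli

variable {K : ℕ}

/-- An element of the ground set `V`: a community index `k` together with the
index `m` of the element `v_k^m` inside its community `V_k`. -/
abbrev Elem (n : Fin K → ℕ) := Σ k : Fin K, Fin (n k)

/-- A sampling slot: a community `k` together with a trial index `b ∈ {1,…,B_k}`. -/
abbrev Slot (B : Fin K → ℕ) := Σ k : Fin K, Fin (B k)

/-- A joint outcome of all the independent multinoulli trials; `none` encodes a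
draw of `∅`, which contributes no element. -/
abbrev Choice (n B : Fin K → ℕ) := ∀ s : Slot B, Option (Fin (n s.1))

/-- The probability that `Multi(p_k)` (the `k`-th block of `x`) assigns to a given
outcome: `x ⟨k,m⟩` for the element `v_k^m` and `1 - Σ_m x ⟨k,m⟩` for `∅`. -/
def prob (n : Fin K → ℕ) (x : Elem n → ℝ) (k : Fin K) : Option (Fin (n k)) → ℝ
  | some m => x ⟨k, m⟩
  | none => 1 - ∑ m : Fin (n k), x ⟨k, m⟩

/-- The probability of the joint outcome `e` (all trials are mutually independent). -/
def jointProb (n B : Fin K → ℕ) (x : Elem n → ℝ) (e : Choice n B) : ℝ :=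
  ∏ s : Slot B, prob n x s.1 (e s)

/-- The subset of the ground set selected by the trials whose slot lies in `A`
(a draw of `∅` contributes no element to the union). -/
def chosen (n B : Fin K → ℕ) (e : Choice n B) (A : Finset (Slot B)) : Finset (Elem n) :=
  A.biUnion fun s => ((e s).map fun m => (⟨s.1, m⟩ : Elem n)).toFinset

/-- The Multinoulli Extension `F` of the set function `f`:
`F(x) = E[f(∪_{k,b} {e_k^b})]` for mutually independent `e_k^b ∼ Multi(p_k)`. -/
def ME (n B : Fin K → ℕ) (f : Finset (Elem n) → ℝ) (x : Elem n → ℝ) : ℝ :=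
  ∑ e : Choice n B, f (chosen n B e Finset.univ) * jointProb n B x e

/-- The first-order partial derivative `∂G/∂x_i` at `x`. -/
def pderiv (n : Fin K → ℕ) (G : (Elem n → ℝ) → ℝ) (i : Elem n) (x : Elem n → ℝ) : ℝ :=
  deriv (fun t => G (Function.update x i t)) (x i)

/-- The gradient `∇G(x)`. -/
def grad (n : Fin K → ℕ) (G : (Elem n → ℝ) → ℝ) (x : Elem n → ℝ) : Elem n → ℝ :=
  fun i => pderiv n G i x

/-- The second-order partial derivative `∂²G/∂x_i∂x_j` at `x`. -/
def pderiv2 (n : Fin K → ℕ) (G : (Elem n → ℝ) → ℝ) (i j : Elem n) (x : Elem n → ℝ) : ℝ :=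
  pderiv n (fun y => pderiv n G j y) i x

/-- The Euclidean inner product on `∏_k ℝ^{n_k}`. -/
def inner' (n : Fin K → ℕ) (u v : Elem n → ℝ) : ℝ := ∑ i : Elem n, u i * v i

/-- Membership in the product of simplices `∏_{k=1}^K Δ_{n_k}`. -/
def InSimplex (n : Fin K → ℕ) (x : Elem n → ℝ) : Prop :=
  (∀ i, 0 ≤ x i) ∧ ∀ k : Fin K, ∑ m : Fin (n k), x ⟨k, m⟩ ≤ 1

/-- Feasibility for the partition constraint: `|S ∩ V_k| ≤ B_k` for all `k`. -/
def Feasible (n B : Fin K → ℕ) (S : Finset (Elem n)) : Prop :=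
  ∀ k : Fin K, (S.filter fun i => i.1 = k).card ≤ B k

/-- Monotonicity of a set function. -/
def MonotoneSet (n : Fin K → ℕ) (f : Finset (Elem n) → ℝ) : Prop :=
  ∀ A B : Finset (Elem n), A ⊆ B → f A ≤ f B

/-- The marginal contribution `f(v|A) = f(A ∪ {v}) - f(A)`. -/
def marg (n : Fin K → ℕ) (f : Finset (Elem n) → ℝ) (v : Elem n) (A : Finset (Elem n)) : ℝ :=
  f (insert v A) - f A

/-- `α`-weak DR-submodularity: `f(v|A) ≥ α·f(v|B)` for all `A ⊆ B` and `v ∉ B`. -/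
def WeaklyDR (n : Fin K → ℕ) (f : Finset (Elem n) → ℝ) (α : ℝ) : Prop :=
  ∀ A B : Finset (Elem n), A ⊆ B → ∀ v, v ∉ B → α * marg n f v B ≤ marg n f v A

/-- `γ`-weak submodularity from below. -/
def WeaklyBelow (n : Fin K → ℕ) (f : Finset (Elem n) → ℝ) (γ : ℝ) : Prop :=
  ∀ A B : Finset (Elem n), A ⊆ B → γ * (f B - f A) ≤ ∑ v ∈ B \ A, marg n f v A

/-- `β`-weak submodularity from above. -/
def WeaklyAbove (n : Fin K → ℕ) (f : Finset (Elem n) → ℝ) (β : ℝ) : Prop :=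
  ∀ A B : Finset (Elem n), A ⊆ B → ∑ v ∈ B \ A, marg n f v (B.erase v) ≤ β * (f B - f A)

/-- The scaled indicator vector `Σ_{k=1}^K (1/B_k)·1_{S∩V_k}`. -/
def indVec (n B : Fin K → ℕ) (S : Finset (Elem n)) : Elem n → ℝ :=
  fun i => if i ∈ S then ((B i.1 : ℝ))⁻¹ else 0

variable {n B : Fin K → ℕ}

section Sampling

variable (e : Choice n B)

def slotSet (k : Fin K) (o : Option (Fin (n k))) : Finset (Elem n) :=
  (o.map fun m => (⟨k, m⟩ : Elem n)).toFinset

lemma slotSet_none_union (k : Fin K) (T : Finset (Elem n)) : slotSet k none ∪ T = T := by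
  simp [slotSet]

lemma slotSet_some_union (k : Fin K) (m : Fin (n k)) (T : Finset (Elem n)) :
    slotSet k (some m) ∪ T = insert ⟨k, m⟩ T := by
  simp [slotSet]

def chosenExcept (s : Slot B) : Finset (Elem n) :=
  chosen n B e (univ.erase s)

lemma chosen_univ_eq_union (s : Slot B) :
    chosen n B e univ = slotSet s.1 (e s) ∪ chosenExcept e s := by
  rw [chosen, ← insert_erase (mem_univ s), biUnion_insert]
  rfl

lemma chosenExcept_subset (s : Slot B) : chosenExcept e s ⊆ chosen n B e univ :=
  biUnion_subset_biUnion_of_subset_left _ (erase_subset _ _)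

lemma mem_chosenExcept {s s' : Slot B} (hne : s' ≠ s) {m : Fin (n s'.1)} (hm : e s' = some m) :
    (⟨s'.1, m⟩ : Elem n) ∈ chosenExcept e s :=
  mem_biUnion.2 ⟨s', mem_erase.2 ⟨hne, mem_univ s'⟩, by simp [hm]⟩

lemma chosenExcept_update (s : Slot B) (o : Option (Fin (n s.1))) :
    chosenExcept (Function.update e s o) s = chosenExcept e s :=
  biUnion_congr rfl fun s' hs' => by rw [Function.update_of_ne (ne_of_mem_erase hs')]

lemma chosen_univ_update (s : Slot B) (o : Option (Fin (n s.1))) :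
    chosen n B (Function.update e s o) univ = slotSet s.1 o ∪ chosenExcept e s := by
  rw [chosen_univ_eq_union _ s, Function.update_self, chosenExcept_update]

lemma chosenExcept_eq_or (s : Slot B) :
    chosenExcept e s = chosen n B e univ ∨
      ∃ m, e s = some m ∧ (⟨s.1, m⟩ : Elem n) ∉ chosenExcept e s ∧
        chosen n B e univ = insert ⟨s.1, m⟩ (chosenExcept e s) := by
  rw [chosen_univ_eq_union e s]
  rcases e s with _ | m
  · exact Or.inl (slotSet_none_union _ _).symm
  · rw [slotSet_some_union]
    by_cases hm : (⟨s.1, m⟩ : Elem n) ∈ chosenExcept e s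
    · exact Or.inl (insert_eq_of_mem hm).symm
    · exact Or.inr ⟨m, rfl, hm, rfl⟩

end Sampling

section Probability

variable {x : Elem n → ℝ}

def probExcept (x : Elem n → ℝ) (e : Choice n B) (s : Slot B) : ℝ :=
  ∏ s' ∈ univ.erase s, prob n x s'.1 (e s')

lemma jointProb_eq_mul_probExcept (e : Choice n B) (s : Slot B) :
    jointProb n B x e = prob n x s.1 (e s) * probExcept x e s :=
  (mul_prod_erase univ _ (mem_univ s)).symm

lemma probExcept_update (e : Choice n B) (s : Slot B) (o : Option (Fin (n s.1))) :
    probExcept x (Function.update e s o) s = probExcept x e s :=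
  prod_congr rfl fun s' hs' => by rw [Function.update_of_ne (ne_of_mem_erase hs')]

lemma sum_prob (k : Fin K) : ∑ o, prob n x k o = 1 := by
  simp [Fintype.sum_option, prob]

lemma prob_nonneg (hx : InSimplex n x) (k : Fin K) : ∀ o, 0 ≤ prob n x k o
  | some _ => hx.1 _
  | none => sub_nonneg.2 (hx.2 k)

lemma jointProb_nonneg (hx : InSimplex n x) (e : Choice n B) : 0 ≤ jointProb n B x e :=
  prod_nonneg fun s _ => prob_nonneg hx s.1 (e s)

lemma sum_jointProb : ∑ e : Choice n B, jointProb n B x e = 1 := by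
  simp only [jointProb, ← Fintype.prod_sum, sum_prob, prod_const_one]

lemma sum_mul_probExcept (s : Slot B) (w : Option (Fin (n s.1)) → ℝ) (Φ : Choice n B → ℝ) :
    ∑ e : Choice n B, w (e s) * probExcept x e s * Φ e
      = ∑ e : Choice n B, jointProb n B x e * ∑ o, w o * Φ (Function.update e s o) := by
  -- `(e, o) ↦ (update e s o, e s)` is an involution of `Choice n B × Option (Fin (n s.1))`
  set σ : Choice n B × Option (Fin (n s.1)) → Choice n B × Option (Fin (n s.1)) :=
    fun p => (Function.update p.1 s p.2, p.1 s)
  have hσ : Function.Involutive σ := by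
    rintro ⟨e, o⟩
    simp [σ]
  set G : Choice n B × Option (Fin (n s.1)) → ℝ := fun p =>
    prob n x s.1 (p.1 s) * probExcept x p.1 s * (w p.2 * Φ (Function.update p.1 s p.2))
  calc ∑ e, w (e s) * probExcept x e s * Φ e
      = ∑ p, G (σ p) := by
        simp only [G, σ, Fintype.sum_prod_type, Function.update_self, probExcept_update,
          Function.update_idem, Function.update_eq_self, ← sum_mul, sum_prob, one_mul]
        exact sum_congr rfl fun e _ => by ring
    _ = ∑ p, G p := Equiv.sum_comp (hσ.toPerm σ) G
    _ = _ := by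
        simp only [G, Fintype.sum_prod_type, ← jointProb_eq_mul_probExcept, mul_sum]

lemma sum_jointProb_mul_eq_resample (s : Slot B) (Φ : Choice n B → ℝ) :
    ∑ e : Choice n B, jointProb n B x e * Φ e
      = ∑ e : Choice n B, jointProb n B x e * ∑ o, prob n x s.1 o * Φ (Function.update e s o) := by
  simp_rw [← sum_mul_probExcept, jointProb_eq_mul_probExcept _ s]

end Probability

section Derivative

/-- `∂ (prob n x k o) / ∂x_i`, which does not depend on `x`. -/
def dprob (i : Elem n) (k : Fin K) : Option (Fin (n k)) → ℝ
  | some m => (Pi.single i 1 : Elem n → ℝ) ⟨k, m⟩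
  | none => -∑ m, (Pi.single i 1 : Elem n → ℝ) ⟨k, m⟩

lemma hasDerivAt_prob (x : Elem n → ℝ) (i : Elem n) (k : Fin K) (o : Option (Fin (n k)))
    (t : ℝ) : HasDerivAt (fun t => prob n (Function.update x i t) k o) (dprob i k o) t := by
  have h := hasDerivAt_pi.1 (hasDerivAt_update x i t)
  cases o with
  | some m => exact h ⟨k, m⟩
  | none => exact (HasDerivAt.fun_sum fun m _ => h ⟨k, m⟩).const_sub 1

lemma sum_dprob_mul_self {k : Fin K} (m : Fin (n k)) (g : Option (Fin (n k)) → ℝ) :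
    ∑ o, dprob ⟨k, m⟩ k o * g o = g (some m) - g none := by
  simp [Fintype.sum_option, dprob, Pi.single_apply]
  ring

lemma dprob_of_ne {i : Elem n} {k : Fin K} (h : k ≠ i.1) (o : Option (Fin (n k))) :
    dprob i k o = 0 := by
  have hne : ∀ m, (⟨k, m⟩ : Elem n) ≠ i := fun m hm => h (congrArg Sigma.fst hm)
  cases o <;> simp [dprob, hne]

lemma hasDerivAt_jointProb (x : Elem n → ℝ) (i : Elem n) (e : Choice n B) :
    HasDerivAt (fun t => jointProb n B (Function.update x i t) e)
      (∑ s, probExcept x e s * dprob i s.1 (e s)) (x i) := by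
  have h := HasDerivAt.fun_finsetProd (u := univ) fun s _ => hasDerivAt_prob x i s.1 (e s) (x i)
  simp only [Function.update_eq_self, smul_eq_mul] at h
  exact h

lemma pderiv_ME (f : Finset (Elem n) → ℝ) (x : Elem n → ℝ) (i : Elem n) :
    pderiv n (ME n B f) i x
      = ∑ b : Fin (B i.1), ∑ e, jointProb n B x e * marg n f i (chosenExcept e ⟨i.1, b⟩) := by
  obtain ⟨k, m⟩ := i
  have hd : HasDerivAt (fun t => ME n B f (Function.update x ⟨k, m⟩ t))
      (∑ e, f (chosen n B e univ) * ∑ s, probExcept x e s * dprob ⟨k, m⟩ s.1 (e s))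
      (x ⟨k, m⟩) :=
    HasDerivAt.fun_sum fun e _ => (hasDerivAt_jointProb x _ e).const_mul _
  rw [pderiv, hd.deriv]
  calc ∑ e, f (chosen n B e univ) * ∑ s, probExcept x e s * dprob ⟨k, m⟩ s.1 (e s)
      = ∑ s : Slot B, ∑ e, dprob ⟨k, m⟩ s.1 (e s) * probExcept x e s * f (chosen n B e univ) := by
        simp_rw [mul_sum]
        rw [sum_comm]
        exact sum_congr rfl fun s _ => sum_congr rfl fun e _ => by ring
    _ = ∑ s : Slot B, ∑ e, jointProb n B x e *
          ∑ o, dprob ⟨k, m⟩ s.1 o * f (slotSet s.1 o ∪ chosenExcept e s) := by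
        simp_rw [sum_mul_probExcept, chosen_univ_update]
    _ = _ := by
        rw [Fintype.sum_sigma, sum_eq_single k]
        · simp_rw [sum_dprob_mul_self, slotSet_some_union, slotSet_none_union]
          rfl
        · intro k' _ hk'
          simp [dprob_of_ne (i := ⟨k, m⟩) hk']
        · simp

end Derivative

section Gradient

variable (f : Finset (Elem n) → ℝ)

def leaveOneOutSum (e : Choice n B) : ℝ :=
  ∑ s, (f (chosen n B e univ) - f (chosenExcept e s))

def swapGain (S : Finset (Elem n)) (e : Choice n B) : ℝ :=
  ∑ i ∈ S, (B i.1 : ℝ)⁻¹ * ∑ b : Fin (B i.1), marg n f i (chosenExcept e ⟨i.1, b⟩)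

lemma inner'_sub_left (u v g : Elem n → ℝ) :
    inner' n (fun i => u i - v i) g = inner' n u g - inner' n v g := by
  simp only [inner', sub_mul, sum_sub_distrib]

lemma sum_jointProb_mul_sub_chosenExcept (x : Elem n → ℝ) (s : Slot B) :
    ∑ e, jointProb n B x e * (f (chosen n B e univ) - f (chosenExcept e s))
      = ∑ e, jointProb n B x e * ∑ m, x ⟨s.1, m⟩ * marg n f ⟨s.1, m⟩ (chosenExcept e s) := by
  rw [sum_jointProb_mul_eq_resample s]
  refine sum_congr rfl fun e _ => ?_
  simp [Fintype.sum_option, chosen_univ_update, chosenExcept_update, slotSet_none_union,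
    slotSet_some_union, prob, marg]

lemma inner'_grad_ME_self (x : Elem n → ℝ) :
    inner' n x (grad n (ME n B f) x) = ∑ e, jointProb n B x e * leaveOneOutSum f e := by
  calc inner' n x (grad n (ME n B f) x)
      = ∑ k, ∑ b : Fin (B k), ∑ e, jointProb n B x e *
          ∑ m, x ⟨k, m⟩ * marg n f ⟨k, m⟩ (chosenExcept e ⟨k, b⟩) := by
        rw [inner', Fintype.sum_sigma]
        refine sum_congr rfl fun k _ => ?_
        simp_rw [grad, pderiv_ME, mul_sum]
        rw [sum_comm (s := (univ : Finset (Fin (n k)))) (t := (univ : Finset (Fin (B k))))]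
        refine sum_congr rfl fun b _ => ?_
        rw [sum_comm (s := (univ : Finset (Fin (n k))))]
        exact sum_congr rfl fun e _ => sum_congr rfl fun m _ => by ring
    _ = ∑ s : Slot B, ∑ e, jointProb n B x e * (f (chosen n B e univ) - f (chosenExcept e s)) := by
        simp_rw [sum_jointProb_mul_sub_chosenExcept, Fintype.sum_sigma]
    _ = _ := by
        simp_rw [leaveOneOutSum, mul_sum]
        rw [sum_comm]

lemma inner'_indVec_grad_ME (x : Elem n → ℝ) (S : Finset (Elem n)) :
    inner' n (indVec n B S) (grad n (ME n B f) x) = ∑ e, jointProb n B x e * swapGain f S e := by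
  simp only [inner', grad, indVec, ite_mul, zero_mul]
  rw [sum_ite_mem, univ_inter]
  simp_rw [pderiv_ME, swapGain, mul_sum]
  refine Eq.trans ?_ sum_comm
  refine sum_congr rfl fun i _ => ?_
  rw [sum_comm]
  exact sum_congr rfl fun e _ => sum_congr rfl fun b _ => by ring

end Gradient

section Bounds

variable {f : Finset (Elem n) → ℝ}

lemma leaveOneOutSum_le_sum_erase (hmono : MonotoneSet n f) (e : Choice n B) :
    leaveOneOutSum f e
      ≤ ∑ v ∈ chosen n B e univ, (f (chosen n B e univ) - f ((chosen n B e univ).erase v)) := by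
  set R := chosen n B e univ
  set T := univ.filter fun s : Slot B => chosenExcept e s ≠ R
  set pick : Slot B → Option (Elem n) := fun s => (e s).map fun m => ⟨s.1, m⟩
  set g : Option (Elem n) → ℝ := fun o => o.elim 0 fun v => f R - f (R.erase v)
  have hT : ∀ s ∈ T, ∃ m, e s = some m ∧ (⟨s.1, m⟩ : Elem n) ∉ chosenExcept e s ∧
      R = insert ⟨s.1, m⟩ (chosenExcept e s) :=
    fun s hs => (chosenExcept_eq_or e s).resolve_left (mem_filter.1 hs).2
  have hterm : ∀ s ∈ T, f R - f (chosenExcept e s) = g (pick s) := by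
    intro s hs
    obtain ⟨m, hm, hnot, hR⟩ := hT s hs
    simp only [g, pick, hm, Option.map_some, Option.elim_some]
    rw [hR, erase_insert hnot]
  have hinj : Set.InjOn pick T := by
    intro s₁ hs₁ s₂ hs₂ h
    by_contra hne
    obtain ⟨m₁, hm₁, hnot₁, -⟩ := hT s₁ hs₁
    obtain ⟨m₂, hm₂, -, -⟩ := hT s₂ hs₂
    simp only [pick, hm₁, hm₂, Option.map_some, Option.some_inj] at h
    exact hnot₁ (h ▸ mem_chosenExcept e (Ne.symm hne) hm₂)
  have hsub : T.image pick ⊆ R.image some := by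
    intro o ho
    obtain ⟨s, hs, rfl⟩ := mem_image.1 ho
    obtain ⟨m, hm, -, hR⟩ := hT s hs
    exact mem_image.2 ⟨⟨s.1, m⟩, hR ▸ mem_insert_self _ _, by simp [pick, hm]⟩
  calc leaveOneOutSum f e = ∑ s ∈ T, (f R - f (chosenExcept e s)) := by
        refine (sum_filter_of_ne fun s _ h => ?_).symm
        exact fun hs => h (by rw [hs, sub_self])
    _ = ∑ o ∈ T.image pick, g o := by rw [sum_image hinj]; exact sum_congr rfl hterm
    _ ≤ ∑ o ∈ R.image some, g o := by
        refine sum_le_sum_of_subset_of_nonneg hsub fun o ho _ => ?_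
        obtain ⟨v, -, rfl⟩ := mem_image.1 ho
        exact sub_nonneg.2 (hmono _ _ (erase_subset v R))
    _ = ∑ v ∈ R, (f R - f (R.erase v)) := sum_image fun _ _ _ _ h => Option.some_injective _ h

lemma WeaklyAbove.sum_sub_erase_le {β : ℝ} (habove : WeaklyAbove n f β) (hf0 : ∀ S, 0 ≤ f S)
    (hβ : 0 ≤ β) (R : Finset (Elem n)) : ∑ v ∈ R, (f R - f (R.erase v)) ≤ β * f R := by
  have h := habove ∅ R (empty_subset R)
  rw [sdiff_empty] at h
  calc ∑ v ∈ R, (f R - f (R.erase v)) = ∑ v ∈ R, marg n f v (R.erase v) :=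
        sum_congr rfl fun v hv => by rw [marg, insert_erase hv]
    _ ≤ β * (f R - f ∅) := h
    _ ≤ β * f R := mul_le_mul_of_nonneg_left (sub_le_self _ (hf0 ∅)) hβ

lemma leaveOneOutSum_le {β : ℝ} (hmono : MonotoneSet n f) (habove : WeaklyAbove n f β)
    (hf0 : ∀ S, 0 ≤ f S) (hβ : 0 ≤ β) (e : Choice n B) :
    leaveOneOutSum f e ≤ β * f (chosen n B e univ) :=
  (leaveOneOutSum_le_sum_erase hmono e).trans (habove.sum_sub_erase_le hf0 hβ _)

lemma WeaklyBelow.marg_sub_marg_erase_le {γ : ℝ} (hbelow : WeaklyBelow n f γ)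
    {R : Finset (Elem n)} {u v : Elem n} (hu : u ∈ R) (hv : v ∉ R) :
    marg n f v R - marg n f v (R.erase u)
      ≤ (1 - γ) * (marg n f v R + (f R - f (R.erase u))) := by
  have huv : v ≠ u := fun h => hv (h ▸ hu)
  have h := hbelow (R.erase u) (insert v R) ((erase_subset u R).trans (subset_insert v R))
  have hdiff : insert v R \ R.erase u = {v, u} := by
    ext w
    simp only [mem_sdiff, mem_insert, mem_erase, mem_singleton]
    constructor
    · rintro ⟨hw | hw, hwu⟩
      · exact Or.inl hw
      · exact Or.inr (by_contra fun h => hwu ⟨h, hw⟩)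
    · rintro (rfl | rfl)
      · exact ⟨Or.inl rfl, fun h => hv h.2⟩
      · exact ⟨Or.inr hu, fun h => h.1 rfl⟩
  rw [hdiff, sum_pair huv] at h
  simp only [marg, insert_erase hu] at h ⊢
  linarith

lemma marg_sub_marg_chosenExcept_le {γ : ℝ} (hmono : MonotoneSet n f) (hγ1 : γ ≤ 1)
    (hbelow : WeaklyBelow n f γ) (e : Choice n B) (s : Slot B) {v : Elem n}
    (hv : v ∉ chosen n B e univ) :
    marg n f v (chosen n B e univ) - marg n f v (chosenExcept e s)
      ≤ (1 - γ) * (marg n f v (chosen n B e univ)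
          + (f (chosen n B e univ) - f (chosenExcept e s))) := by
  rcases chosenExcept_eq_or e s with h | ⟨m, -, hnot, hR⟩
  · rw [h, sub_self, sub_self, add_zero]
    exact mul_nonneg (by linarith) (sub_nonneg.2 (hmono _ _ (subset_insert _ _)))
  · have hE : chosenExcept e s = (chosen n B e univ).erase ⟨s.1, m⟩ := by
      rw [hR, erase_insert hnot]
    rw [hE]
    exact hbelow.marg_sub_marg_erase_le (hR ▸ mem_insert_self _ _) hv

lemma Feasible.subset {S T : Finset (Elem n)} (hS : Feasible n B S) (hT : T ⊆ S) :
    Feasible n B T :=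
  fun k => (card_le_card (filter_subset_filter _ hT)).trans (hS k)

lemma Feasible.sum_inv_mul_le (hB : ∀ k, 0 < B k) {S : Finset (Elem n)} (hS : Feasible n B S)
    (c : Fin K → ℝ) (hc : ∀ k, 0 ≤ c k) : ∑ i ∈ S, (B i.1 : ℝ)⁻¹ * c i.1 ≤ ∑ k, c k := by
  rw [← sum_fiberwise S fun i => i.1]
  refine sum_le_sum fun k _ => ?_
  rw [sum_congr rfl fun i hi => by rw [(mem_filter.1 hi).2], sum_const, nsmul_eq_mul]
  have hBk : (0 : ℝ) < B k := by exact_mod_cast hB k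
  have hcard : ((S.filter fun i => i.1 = k).card : ℝ) / B k ≤ 1 :=
    (div_le_one hBk).2 (by exact_mod_cast hS k)
  calc ((S.filter fun i => i.1 = k).card : ℝ) * ((B k : ℝ)⁻¹ * c k)
      = ((S.filter fun i => i.1 = k).card : ℝ) / B k * c k := by ring
    _ ≤ c k := mul_le_of_le_one_left (hc k) hcard

lemma sq_mul_sub_le_swapGain_add {γ : ℝ} (hmono : MonotoneSet n f)
    (hγ0 : 0 < γ) (hγ1 : γ ≤ 1) (hbelow : WeaklyBelow n f γ) (hB : ∀ k, 0 < B k)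
    {S : Finset (Elem n)} (hS : Feasible n B S) (e : Choice n B) :
    γ ^ 2 * (f S - f (chosen n B e univ)) ≤ swapGain f S e + (1 - γ) * leaveOneOutSum f e := by
  set R := chosen n B e univ
  set L : Fin K → ℝ := fun k => ∑ b : Fin (B k), (f R - f (chosenExcept e ⟨k, b⟩))
  set X : Elem n → ℝ := fun v => ∑ b : Fin (B v.1), marg n f v (chosenExcept e ⟨v.1, b⟩)
  have hslot : ∀ v ∈ S \ R,
      γ * marg n f v R ≤ (B v.1 : ℝ)⁻¹ * X v + (1 - γ) * ((B v.1 : ℝ)⁻¹ * L v.1) := by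
    intro v hv
    have h := sum_le_sum fun b (_ : b ∈ univ) =>
      marg_sub_marg_chosenExcept_le hmono hγ1 hbelow e ⟨v.1, b⟩ (mem_sdiff.1 hv).2
    rw [sum_sub_distrib, ← mul_sum, sum_add_distrib, sum_const, card_univ, Fintype.card_fin,
      nsmul_eq_mul] at h
    have hBv : (0 : ℝ) < B v.1 := by exact_mod_cast hB v.1
    have hmul : γ * (B v.1 * marg n f v R) ≤ X v + (1 - γ) * L v.1 := by linarith
    calc γ * marg n f v R = (B v.1 : ℝ)⁻¹ * (γ * (B v.1 * marg n f v R)) := by field_simp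
      _ ≤ (B v.1 : ℝ)⁻¹ * (X v + (1 - γ) * L v.1) := by gcongr
      _ = _ := by ring
  have hswap : ∑ v ∈ S \ R, (B v.1 : ℝ)⁻¹ * X v ≤ swapGain f S e :=
    sum_le_sum_of_subset_of_nonneg sdiff_subset fun v _ _ =>
      mul_nonneg (by positivity) (sum_nonneg fun b _ => sub_nonneg.2 (hmono _ _ (subset_insert _ _)))
  have hloo : ∑ v ∈ S \ R, (B v.1 : ℝ)⁻¹ * L v.1 ≤ leaveOneOutSum f e :=
    ((hS.subset sdiff_subset).sum_inv_mul_le hB L fun k =>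
      sum_nonneg fun b _ => sub_nonneg.2 (hmono _ _ (chosenExcept_subset e _))).trans_eq
      (Fintype.sum_sigma fun s : Slot B => f R - f (chosenExcept e s)).symm
  have hbel : γ * (f S - f R) ≤ ∑ v ∈ S \ R, marg n f v R := by
    calc γ * (f S - f R) ≤ γ * (f (S ∪ R) - f R) := by
          gcongr
          exact hmono _ _ subset_union_left
      _ ≤ _ := by simpa only [union_sdiff_right] using hbelow R (S ∪ R) subset_union_right
  calc γ ^ 2 * (f S - f R) = γ * (γ * (f S - f R)) := by ring
    _ ≤ γ * ∑ v ∈ S \ R, marg n f v R := mul_le_mul_of_nonneg_left hbel hγ0.le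
    _ ≤ ∑ v ∈ S \ R, ((B v.1 : ℝ)⁻¹ * X v + (1 - γ) * ((B v.1 : ℝ)⁻¹ * L v.1)) := by
        rw [mul_sum]
        exact sum_le_sum hslot
    _ = ∑ v ∈ S \ R, (B v.1 : ℝ)⁻¹ * X v + (1 - γ) * ∑ v ∈ S \ R, (B v.1 : ℝ)⁻¹ * L v.1 := by
        rw [sum_add_distrib, mul_sum]
    _ ≤ swapGain f S e + (1 - γ) * leaveOneOutSum f e :=
        add_le_add hswap (mul_le_mul_of_nonneg_left hloo (by linarith))

lemma indVec_inSimplex (hB : ∀ k, 0 < B k) {S : Finset (Elem n)} (hS : Feasible n B S) :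
    InSimplex n (indVec n B S) := by
  refine ⟨fun i => by unfold indVec; split_ifs <;> positivity, fun k => ?_⟩
  calc ∑ m, indVec n B S ⟨k, m⟩
      = ∑ k', ∑ m, indVec n B S ⟨k', m⟩ * (Pi.single k 1 : Fin K → ℝ) k' := by
        rw [sum_eq_single k (fun k' _ hk' => by simp [hk']) (by simp)]
        simp
    _ = ∑ i ∈ S, (B i.1 : ℝ)⁻¹ * (Pi.single k 1 : Fin K → ℝ) i.1 := by
        rw [← Fintype.sum_sigma fun i : Elem n => indVec n B S i * (Pi.single k 1 : Fin K → ℝ) i.1]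
        simp only [indVec, ite_mul, zero_mul]
        rw [sum_ite_mem, univ_inter]
    _ ≤ ∑ k', (Pi.single k 1 : Fin K → ℝ) k' :=
        hS.sum_inv_mul_le hB _ (Pi.single_nonneg.2 zero_le_one : (0 : Fin K → ℝ) ≤ Pi.single k 1)
    _ = 1 := by simp

end Bounds

lemma sum_jointProb_mul_leaveOneOutSum_le {f : Finset (Elem n) → ℝ} {x : Elem n → ℝ} {β : ℝ}
    (hx : InSimplex n x) (hmono : MonotoneSet n f) (habove : WeaklyAbove n f β)
    (hf0 : ∀ S, 0 ≤ f S) (hβ : 0 ≤ β) :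
    ∑ e, jointProb n B x e * leaveOneOutSum f e ≤ β * ME n B f x := by
  rw [ME, mul_sum]
  refine sum_le_sum fun e _ => ?_
  nlinarith [leaveOneOutSum_le hmono habove hf0 hβ e, jointProb_nonneg hx e]

lemma sq_mul_sub_sq_mul_ME_le {f : Finset (Elem n) → ℝ} {x : Elem n → ℝ} {γ : ℝ}
    (hx : InSimplex n x) (hmono : MonotoneSet n f) (hγ0 : 0 < γ) (hγ1 : γ ≤ 1)
    (hbelow : WeaklyBelow n f γ) (hB : ∀ k, 0 < B k) {S : Finset (Elem n)}
    (hS : Feasible n B S) :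
    γ ^ 2 * f S - γ ^ 2 * ME n B f x ≤ ∑ e, jointProb n B x e * swapGain f S e
      + (1 - γ) * ∑ e, jointProb n B x e * leaveOneOutSum f e := by
  have h := sum_le_sum fun e (_ : e ∈ univ) => mul_le_mul_of_nonneg_left
    (sq_mul_sub_le_swapGain_add hmono hγ0 hγ1 hbelow hB hS e) (jointProb_nonneg hx e)
  simp only [mul_add, mul_sub, sum_add_distrib, sum_sub_distrib, mul_left_comm _ (γ ^ 2),
    mul_left_comm _ (1 - γ), ← mul_sum, ← sum_mul, sum_jointProb, one_mul] at h
  rw [ME]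
  simpa only [mul_comm] using h

theorem multinoulliExtension_stationary_weaklySub_general {K : ℕ} (n B : Fin K → ℕ)
    (hB : ∀ k, 0 < B k)
    (f : Finset (Elem n) → ℝ) (hf0 : ∀ S, 0 ≤ f S)
    (hmono : MonotoneSet n f)
    (γ β : ℝ) (hγ0 : 0 < γ) (hγ1 : γ ≤ 1) (hβ : 1 ≤ β)
    (hbelow : WeaklyBelow n f γ) (habove : WeaklyAbove n f β)
    (x : Elem n → ℝ) (hx : InSimplex n x)
    (hstat : ∀ y : Elem n → ℝ, InSimplex n y →
      inner' n (fun i => y i - x i) (grad n (ME n B f) x) ≤ 0)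
    (S : Finset (Elem n)) (hS : Feasible n B S) :
    γ ^ 2 / (β + β * (1 - γ) + γ ^ 2) * f S ≤ ME n B f x := by
  have hYT : ∑ e, jointProb n B x e * swapGain f S e
      ≤ ∑ e, jointProb n B x e * leaveOneOutSum f e := by
    have h := hstat _ (indVec_inSimplex hB hS)
    rwa [inner'_sub_left, inner'_indVec_grad_ME, inner'_grad_ME_self, sub_nonpos] at h
  have hTF := sum_jointProb_mul_leaveOneOutSum_le (B := B) hx hmono habove hf0 (by linarith)
  have hSF := sq_mul_sub_sq_mul_ME_le hx hmono hγ0 hγ1 hbelow hB hS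
  have hD : 0 < β + β * (1 - γ) + γ ^ 2 := by nlinarith
  have h2γ := mul_le_mul_of_nonneg_left hTF (by linarith : (0 : ℝ) ≤ 2 - γ)
  rw [div_mul_eq_mul_div, div_le_iff₀ hD]
  linarith

theorem multinoulliExtension_stationary_weaklySub {K : ℕ} (n B : Fin K → ℕ) (hn : ∀ k, 1 ≤ n k)
    (hB : ∀ k, 0 < B k) (hBn : ∀ k, B k ≤ n k)
    (f : Finset (Elem n) → ℝ) (hf0 : ∀ S, 0 ≤ f S)
    (hmono : MonotoneSet n f)
    (γ β : ℝ) (hγ0 : 0 < γ) (hγ1 : γ ≤ 1) (hβ : 1 ≤ β)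
    (hbelow : WeaklyBelow n f γ) (habove : WeaklyAbove n f β)
    (x : Elem n → ℝ) (hx : InSimplex n x)
    (hstat : ∀ y : Elem n → ℝ, InSimplex n y →
      inner' n (fun i => y i - x i) (grad n (ME n B f) x) ≤ 0)
    (S : Finset (Elem n)) (hS : Feasible n B S) :
    γ ^ 2 / (β + β * (1 - γ) + γ ^ 2) * f S ≤ ME n B f x :=
  multinoulliExtension_stationary_weaklySub_general n B hB f hf0 hmono γ β hγ0 hγ1 hβ hbelow habove
    x hx hstat S hS

end Multinoulli
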